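/- arXiv:2112.10329 — 2 statements merged into one kernel-verified Lean document; each statement's English description precedes it below -/
import Mathlib

section
/- Let ρ < 0 and let k = k(n) be an intermediate sequence of positive integers, i.e., k → ∞ and k/n → 0 as n → ∞. Then g(k,n,ρ) := (k/n)^ρ Γ(n+1)Γ(k-ρ+1)/(Γ(n-ρ+1)Γ(k+1)) satisfies g(k,n,ρ) = 1 + (1/2)(ρ² - ρ)k^{-1} - (1/2)(ρ² - ρ)(n-ρ)^{-1} + O(k^{-2}) as n → ∞. In particular g(k,n,ρ) → 1. -/
open Real Filter Asymptotics

/-- The quantity `g(k, n, ρ) = (k/n)^ρ Γ(n+1)Γ(k-ρ+1)/(Γ(n-ρ+1)Γ(k+1))`. -/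
noncomputable def gFun (k n : ℕ) (ρ : ℝ) : ℝ :=
  ((k : ℝ) / n) ^ ρ * (Real.Gamma (n + 1) * Real.Gamma (k - ρ + 1)) /
    (Real.Gamma (n - ρ + 1) * Real.Gamma (k + 1))

/-!
With `F x = gammaLogRatio ρ x = log (x^ρ Γ(x - ρ + 1) / Γ(x + 1))` we have
`g(k, n, ρ) = exp (F k - F n)`. The functional equation `Γ(x + 1) = x Γ(x)` makes `F y - F (y + 1)`
a combination of two logarithms of the form `log (1 - t)`, `t = O(1/y)`, and their second-order
Taylor expansions give `F y - F (y + 1) = c (1/y - 1/(y + 1)) + O(y⁻³)` with `c = (ρ² - ρ)/2`.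
Telescoping from `k` to `n ≥ k` yields `F k - F n = c/k - c/n + O(k⁻²)`, and expanding the
exponential finishes the proof. No asymptotics of `Γ` itself are needed.
-/

theorem abs_log_one_sub_add_le {x : ℝ} (hx : |x| ≤ 1 / 2) :
    |log (1 - x) + x + x ^ 2 / 2| ≤ 2 * |x| ^ 3 := by
  have h := abs_log_sub_add_sum_range_le (hx.trans_lt (by norm_num)) 2
  simp only [Finset.sum_range_succ, Finset.sum_range_zero] at h
  norm_num at h
  calc |log (1 - x) + x + x ^ 2 / 2| ≤ |x| ^ 3 / (1 - |x|) := by convert h using 2; ring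
    _ ≤ |x| ^ 3 / (1 / 2) := by gcongr; linarith
    _ = 2 * |x| ^ 3 := by ring

theorem sum_range_one_div_add_pow_three_le {x : ℝ} (hx : 2 ≤ x) (m : ℕ) :
    ∑ j ∈ Finset.range m, 1 / (x + j) ^ 3 ≤ 1 / x ^ 2 := by
  -- `1/y³ ≤ 1/((y-1)y(y+1)) = b(y) - b(y+1)` with `b(y) = 1/(2(y-1)y)`
  set b : ℕ → ℝ := fun j => 1 / (2 * (x + j - 1) * (x + j))
  have hstep : ∀ j ∈ Finset.range m, 1 / (x + j) ^ 3 ≤ b j - b (j + 1) := by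
    intro j _
    have hj : (0 : ℝ) < x + j - 1 := by linarith [j.cast_nonneg (α := ℝ)]
    have hj' : (0 : ℝ) < x + j := by linarith
    have hb : b j - b (j + 1) = 1 / ((x + j - 1) * (x + j) * (x + j + 1)) := by
      simp only [b]
      push_cast
      rw [← add_assoc, add_sub_cancel_right]
      field_simp
      ring
    rw [hb]
    gcongr
    nlinarith
  calc ∑ j ∈ Finset.range m, 1 / (x + j) ^ 3
      ≤ ∑ j ∈ Finset.range m, (b j - b (j + 1)) := Finset.sum_le_sum hstep
    _ = b 0 - b m := Finset.sum_range_sub' b m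
    _ ≤ b 0 := by
      have : (0 : ℝ) < x + m - 1 := by linarith [m.cast_nonneg (α := ℝ)]
      simp only [b, sub_le_self_iff]
      positivity
    _ ≤ 1 / x ^ 2 := by
      simp only [b, Nat.cast_zero, add_zero]
      rw [div_le_div_iff₀ (by nlinarith) (by positivity)]
      nlinarith

theorem isBigO_exp_sub_one_sub_sq {α : Type*} {l : Filter α} {u : α → ℝ}
    (hu : Tendsto u l (nhds 0)) :
    (fun a => exp (u a) - 1 - u a) =O[l] fun a => u a ^ 2 := by
  refine IsBigO.of_bound 1 ?_
  filter_upwards [hu.norm.eventually (eventually_le_nhds (by norm_num : ‖(0 : ℝ)‖ < 1))]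
    with a ha
  rw [one_mul, norm_pow]
  exact norm_exp_sub_one_sub_id_le ha

theorem isBigO_inv_sub_const_sub_inv (ρ : ℝ) :
    (fun x : ℝ => (x - ρ)⁻¹ - x⁻¹) =O[atTop] fun x => (x ^ 2)⁻¹ := by
  refine IsBigO.of_bound (2 * |ρ|) ?_
  filter_upwards [eventually_gt_atTop 0, eventually_ge_atTop (2 * |ρ|)] with x hx hxρ
  have hxρ' : x / 2 ≤ x - ρ := by linarith [le_abs_self ρ]
  have hxρ0 : 0 < x - ρ := by linarith
  rw [inv_sub_inv hxρ0.ne' hx.ne', sub_sub_cancel, norm_div, norm_mul,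
    Real.norm_of_nonneg hxρ0.le, Real.norm_of_nonneg hx.le, norm_inv,
    Real.norm_of_nonneg (sq_nonneg x), Real.norm_eq_abs, div_le_iff₀ (by positivity)]
  calc |ρ| = 2 * |ρ| * (x ^ 2)⁻¹ * (x * (x / 2)) := by field_simp
    _ ≤ 2 * |ρ| * (x ^ 2)⁻¹ * (x * (x - ρ)) := by gcongr
    _ = 2 * |ρ| * (x ^ 2)⁻¹ * ((x - ρ) * x) := by ring

theorem isBigO_one_div_sq_one_div {α : Type*} {l : Filter α} {f : α → ℝ}
    (hf : Tendsto f l atTop) :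
    (fun a => 1 / f a ^ 2) =O[l] fun a => 1 / f a :=
  IsBigO.of_bound' <| by
    filter_upwards [hf.eventually_ge_atTop 1] with a ha
    simp only [norm_div, norm_one, norm_pow, Real.norm_of_nonneg (zero_le_one.trans ha)]
    exact one_div_le_one_div_of_le (by positivity) (by nlinarith)

noncomputable def gammaLogRatio (ρ x : ℝ) : ℝ :=
  log (Gamma (x - ρ + 1)) - log (Gamma (x + 1)) + ρ * log x

theorem gFun_eq_exp_gammaLogRatio_sub {k n : ℕ} {ρ : ℝ} (hk : 0 < k) (hn : 0 < n)
    (hkρ : ρ < k + 1) (hnρ : ρ < n + 1) :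
    gFun k n ρ = exp (gammaLogRatio ρ k - gammaLogRatio ρ n) := by
  have hk0 : (0 : ℝ) < k := by exact_mod_cast hk
  have hn0 : (0 : ℝ) < n := by exact_mod_cast hn
  have hΓn := Gamma_pos_of_pos (by linarith : (0 : ℝ) < n + 1)
  have hΓk := Gamma_pos_of_pos (by linarith : (0 : ℝ) < k + 1)
  have hΓnρ := Gamma_pos_of_pos (by linarith : (0 : ℝ) < n - ρ + 1)
  have hΓkρ := Gamma_pos_of_pos (by linarith : (0 : ℝ) < k - ρ + 1)
  rw [gFun, gammaLogRatio, gammaLogRatio, rpow_def_of_pos (div_pos hk0 hn0),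
    log_div hk0.ne' hn0.ne']
  conv_lhs => rw [← exp_log hΓn, ← exp_log hΓk, ← exp_log hΓnρ, ← exp_log hΓkρ]
  simp only [← exp_add, ← exp_sub]
  ring_nf

theorem gammaLogRatio_sub_gammaLogRatio_add_one {ρ y : ℝ} (hy : 0 < y) (hyρ : ρ < y + 1) :
    gammaLogRatio ρ y - gammaLogRatio ρ (y + 1) =
      ρ * log (1 - 1 / (y + 1)) - log (1 - ρ / (y + 1)) := by
  have hy1 : y + 1 ≠ 0 := by positivity
  have hΓρ : Gamma (y + 1 - ρ + 1) = (y - ρ + 1) * Gamma (y - ρ + 1) := by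
    rw [show y + 1 - ρ + 1 = y - ρ + 1 + 1 by ring, Gamma_add_one (by linarith)]
  have h1 : 1 - 1 / (y + 1) = y / (y + 1) := by field_simp; ring
  have hρ : 1 - ρ / (y + 1) = (y - ρ + 1) / (y + 1) := by field_simp; ring
  rw [gammaLogRatio, gammaLogRatio, hΓρ, Gamma_add_one hy1, h1, hρ,
    log_mul (by linarith) (Gamma_pos_of_pos (by linarith)).ne',
    log_mul hy1 (Gamma_pos_of_pos (by linarith)).ne', log_div hy.ne' hy1,
    log_div (by linarith) hy1]
  ring

theorem abs_gammaLogRatio_sub_gammaLogRatio_add_one_sub_le {ρ y : ℝ} (hy : 1 ≤ y)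
    (hyρ : 2 * |ρ| ≤ y + 1) :
    |gammaLogRatio ρ y - gammaLogRatio ρ (y + 1) - (ρ ^ 2 - ρ) / 2 * (1 / y - 1 / (y + 1))| ≤
      (2 * |ρ| + 2 * |ρ| ^ 3 + |(ρ ^ 2 - ρ) / 2|) / y ^ 3 := by
  set c := (ρ ^ 2 - ρ) / 2
  set t := 1 / (y + 1) with ht
  have hy0 : 0 < y := by linarith
  have ht0 : 0 < t := by positivity
  have hty : t ≤ 1 / y := one_div_le_one_div_of_le hy0 (by linarith)
  have ht_half : |t| ≤ 1 / 2 := by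
    rw [abs_of_pos ht0, ht, div_le_div_iff₀ (by linarith) two_pos]
    linarith
  have hρt_half : |ρ * t| ≤ 1 / 2 := by
    rw [abs_mul, abs_of_pos ht0, ht, mul_one_div, div_le_div_iff₀ (by linarith) two_pos]
    linarith
  set R : ℝ → ℝ := fun x => log (1 - x) + x + x ^ 2 / 2
  -- the quadratic Taylor terms add up to `c t²`, which misses `c (1/y - 1/(y+1))` by
  -- `c / (y (y+1)²)`
  have hsplit : gammaLogRatio ρ y - gammaLogRatio ρ (y + 1) - c * (1 / y - 1 / (y + 1)) =
      ρ * R t - R (ρ * t) - c / (y * (y + 1) ^ 2) := by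
    rw [gammaLogRatio_sub_gammaLogRatio_add_one hy0 (by linarith [neg_abs_le ρ, le_abs_self ρ]),
      ← ht, ← mul_div_assoc, mul_one, ← mul_one_div ρ, ← ht]
    simp only [R, ht, c]
    field_simp
    ring
  have hRt : |ρ * R t| ≤ 2 * |ρ| / y ^ 3 :=
    calc |ρ * R t| ≤ |ρ| * (2 * |t| ^ 3) := by
          rw [abs_mul]
          gcongr
          exact abs_log_one_sub_add_le ht_half
      _ ≤ |ρ| * (2 * (1 / y) ^ 3) := by rw [abs_of_pos ht0]; gcongr
      _ = 2 * |ρ| / y ^ 3 := by ring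
  have hRρt : |R (ρ * t)| ≤ 2 * |ρ| ^ 3 / y ^ 3 :=
    calc |R (ρ * t)| ≤ 2 * |ρ * t| ^ 3 := abs_log_one_sub_add_le hρt_half
      _ ≤ 2 * (|ρ| * (1 / y)) ^ 3 := by rw [abs_mul, abs_of_pos ht0]; gcongr
      _ = 2 * |ρ| ^ 3 / y ^ 3 := by ring
  have hc : |c / (y * (y + 1) ^ 2)| ≤ |c| / y ^ 3 := by
    rw [abs_div, abs_of_pos (by positivity : 0 < y * (y + 1) ^ 2)]
    gcongr
    nlinarith
  rw [hsplit, add_div, add_div]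
  calc |ρ * R t - R (ρ * t) - c / (y * (y + 1) ^ 2)|
      ≤ |ρ * R t| + |R (ρ * t)| + |c / (y * (y + 1) ^ 2)| :=
        (abs_sub _ _).trans (add_le_add_left (abs_sub _ _) _)
    _ ≤ _ := by gcongr

theorem abs_gammaLogRatio_sub_gammaLogRatio_add_nat_sub_le {ρ x : ℝ} (hx : 2 ≤ x)
    (hxρ : 2 * |ρ| ≤ x + 1) (m : ℕ) :
    |gammaLogRatio ρ x - gammaLogRatio ρ (x + m) - (ρ ^ 2 - ρ) / 2 * (1 / x - 1 / (x + m))| ≤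
      (2 * |ρ| + 2 * |ρ| ^ 3 + |(ρ ^ 2 - ρ) / 2|) / x ^ 2 := by
  set C := 2 * |ρ| + 2 * |ρ| ^ 3 + |(ρ ^ 2 - ρ) / 2|
  set G : ℕ → ℝ := fun j => gammaLogRatio ρ (x + j) - (ρ ^ 2 - ρ) / 2 * (1 / (x + j))
  have hG : ∀ j, G j - G (j + 1) = gammaLogRatio ρ (x + j) - gammaLogRatio ρ (x + j + 1) -
      (ρ ^ 2 - ρ) / 2 * (1 / (x + j) - 1 / (x + j + 1)) := by
    intro j
    simp only [G]
    push_cast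
    rw [← add_assoc]
    ring
  have hterm : ∀ j ∈ Finset.range m, |G j - G (j + 1)| ≤ C * (1 / (x + j) ^ 3) := by
    intro j _
    have hj : (0 : ℝ) ≤ j := j.cast_nonneg
    rw [hG, mul_one_div]
    exact abs_gammaLogRatio_sub_gammaLogRatio_add_one_sub_le (by linarith) (by linarith)
  calc |gammaLogRatio ρ x - gammaLogRatio ρ (x + m) - (ρ ^ 2 - ρ) / 2 * (1 / x - 1 / (x + m))|
      = |∑ j ∈ Finset.range m, (G j - G (j + 1))| := by
        rw [Finset.sum_range_sub']
        simp only [G, Nat.cast_zero, add_zero]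
        ring_nf
    _ ≤ ∑ j ∈ Finset.range m, C * (1 / (x + j) ^ 3) :=
        (Finset.abs_sum_le_sum_abs _ _).trans (Finset.sum_le_sum hterm)
    _ ≤ C * (1 / x ^ 2) := by
        rw [← Finset.mul_sum]
        gcongr
        exact sum_range_one_div_add_pow_three_le hx m
    _ = C / x ^ 2 := mul_one_div C _

section IntermediateSequence

variable {k : ℕ → ℕ}

theorem eventually_le_of_tendsto_div_zero
    (hkn : Tendsto (fun n : ℕ => (k n : ℝ) / n) atTop (nhds 0)) :
    ∀ᶠ n in atTop, k n ≤ n := by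
  filter_upwards [hkn.eventually (eventually_le_nhds one_pos), eventually_gt_atTop 0] with n h hn
  rwa [div_le_one (by exact_mod_cast hn), Nat.cast_le] at h

theorem isBigO_one_div_natCast_one_div_of_le (hk : Tendsto k atTop atTop)
    (hle : ∀ᶠ n in atTop, k n ≤ n) :
    (fun n : ℕ => 1 / (n : ℝ)) =O[atTop] fun n => 1 / (k n : ℝ) :=
  IsBigO.of_bound' <| by
    filter_upwards [hle, ((tendsto_natCast_atTop_iff (R := ℝ)).mpr hk).eventually_gt_atTop 0]
      with n hkn hk0
    simp only [norm_div, norm_one, Real.norm_natCast]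
    exact one_div_le_one_div_of_le hk0 (Nat.cast_le.mpr hkn)

theorem isBigO_inv_natCast_sub_const_sub_inv (ρ : ℝ) (hk : Tendsto k atTop atTop)
    (hle : ∀ᶠ n in atTop, k n ≤ n) :
    (fun n : ℕ => ((n : ℝ) - ρ)⁻¹ - (n : ℝ)⁻¹) =O[atTop] fun n => 1 / (k n : ℝ) ^ 2 := by
  have hinv_sq : (fun n : ℕ => ((n : ℝ) ^ 2)⁻¹) =O[atTop] fun n => 1 / (k n : ℝ) ^ 2 := by
    simpa only [one_div, inv_pow] using (isBigO_one_div_natCast_one_div_of_le hk hle).pow 2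
  exact ((isBigO_inv_sub_const_sub_inv ρ).comp_tendsto tendsto_natCast_atTop_atTop).trans hinv_sq

theorem isBigO_gammaLogRatio_sub_sub (ρ : ℝ) (hk : Tendsto k atTop atTop)
    (hle : ∀ᶠ n in atTop, k n ≤ n) :
    (fun n : ℕ => gammaLogRatio ρ (k n) - gammaLogRatio ρ n -
        (ρ ^ 2 - ρ) / 2 * (1 / (k n : ℝ) - 1 / n)) =O[atTop] fun n => 1 / (k n : ℝ) ^ 2 := by
  refine IsBigO.of_bound (2 * |ρ| + 2 * |ρ| ^ 3 + |(ρ ^ 2 - ρ) / 2|) ?_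
  filter_upwards [hle,
    ((tendsto_natCast_atTop_iff (R := ℝ)).mpr hk).eventually_ge_atTop (2 + 2 * |ρ|)]
    with n hkn hk2
  have hcast : (k n : ℝ) + (n - k n : ℕ) = n := by rw [← Nat.cast_add, Nat.add_sub_cancel' hkn]
  have hbound := abs_gammaLogRatio_sub_gammaLogRatio_add_nat_sub_le (ρ := ρ) (x := k n)
    (by linarith [abs_nonneg ρ]) (by linarith) (n - k n)
  rw [hcast] at hbound
  rwa [Real.norm_eq_abs, Real.norm_of_nonneg (by positivity), mul_one_div]

theorem isBigO_gammaLogRatio_sub (ρ : ℝ) (hk : Tendsto k atTop atTop)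
    (hle : ∀ᶠ n in atTop, k n ≤ n) :
    (fun n : ℕ => gammaLogRatio ρ (k n) - gammaLogRatio ρ n) =O[atTop]
      fun n => 1 / (k n : ℝ) :=
  (((isBigO_gammaLogRatio_sub_sub ρ hk hle).trans
      (isBigO_one_div_sq_one_div ((tendsto_natCast_atTop_iff (R := ℝ)).mpr hk))).add
    (((isBigO_refl _ _).sub (isBigO_one_div_natCast_one_div_of_le hk hle)).const_mul_left
      ((ρ ^ 2 - ρ) / 2))).congr_left fun n => by ring

theorem eventually_gFun_eq_exp (ρ : ℝ) (hk : Tendsto k atTop atTop)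
    (hle : ∀ᶠ n in atTop, k n ≤ n) :
    ∀ᶠ n in atTop, gFun (k n) n ρ = exp (gammaLogRatio ρ (k n) - gammaLogRatio ρ n) := by
  filter_upwards [hle, ((tendsto_natCast_atTop_iff (R := ℝ)).mpr hk).eventually_gt_atTop |ρ|]
    with n hkn hkρ
  have hk0 : 0 < k n := by exact_mod_cast (abs_nonneg ρ).trans_lt hkρ
  have hnρ : |ρ| < n := hkρ.trans_le (Nat.cast_le.mpr hkn)
  exact gFun_eq_exp_gammaLogRatio_sub hk0 (hk0.trans_le hkn)
    (by linarith [le_abs_self ρ]) (by linarith [le_abs_self ρ])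

end IntermediateSequence

theorem gFun_expansion_intermediate_general (ρ : ℝ) (k : ℕ → ℕ)
    (hk : Tendsto k atTop atTop)
    (hkn : Tendsto (fun n : ℕ => (k n : ℝ) / n) atTop (nhds 0)) :
    ((fun n : ℕ => gFun (k n) n ρ -
        (1 + (1 / 2) * (ρ ^ 2 - ρ) * (k n : ℝ)⁻¹ - (1 / 2) * (ρ ^ 2 - ρ) * ((n : ℝ) - ρ)⁻¹))
      =O[atTop] fun n : ℕ => (1 : ℝ) / (k n : ℝ) ^ 2) ∧
    Tendsto (fun n : ℕ => gFun (k n) n ρ) atTop (nhds 1) := by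
  set u : ℕ → ℝ := fun n => gammaLogRatio ρ (k n) - gammaLogRatio ρ n
  have hle := eventually_le_of_tendsto_div_zero hkn
  have hu := isBigO_gammaLogRatio_sub ρ hk hle
  have hu0 : Tendsto u atTop (nhds 0) :=
    hu.trans_tendsto (tendsto_const_nhds.div_atTop ((tendsto_natCast_atTop_iff (R := ℝ)).mpr hk))
  have hg := eventually_gFun_eq_exp ρ hk hle
  have hexp : (fun n => exp (u n) - 1 - u n) =O[atTop] fun n => 1 / (k n : ℝ) ^ 2 := by
    simpa only [one_div, inv_pow] using (isBigO_exp_sub_one_sub_sq hu0).trans (hu.pow 2)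
  refine ⟨(((hexp.add (isBigO_gammaLogRatio_sub_sub ρ hk hle)).add
      ((isBigO_inv_natCast_sub_const_sub_inv ρ hk hle).const_mul_left ((ρ ^ 2 - ρ) / 2))).congr'
        ?_ EventuallyEq.rfl), ?_⟩
  · filter_upwards [hg] with n hgn
    rw [hgn]
    ring
  · simpa only [exp_zero] using
      ((continuous_exp.tendsto 0).comp hu0).congr' (hg.mono fun n h => h.symm)

/-- For `ρ < 0` and an intermediate sequence `k = k(n)` (`k → ∞`,
`k/n → 0`), `g(k,n,ρ) = 1 + (ρ²-ρ)/(2k) - (ρ²-ρ)/(2(n-ρ)) + O(k^{-2})` as `n → ∞`;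
in particular `g(k,n,ρ) → 1`. -/
theorem gFun_expansion_intermediate (ρ : ℝ) (hρ : ρ < 0) (k : ℕ → ℕ)
    (hk : Tendsto k atTop atTop)
    (hkn : Tendsto (fun n : ℕ => (k n : ℝ) / n) atTop (nhds 0)) :
    ((fun n : ℕ => gFun (k n) n ρ -
        (1 + (1 / 2) * (ρ ^ 2 - ρ) * (k n : ℝ)⁻¹ - (1 / 2) * (ρ ^ 2 - ρ) * ((n : ℝ) - ρ)⁻¹))
      =O[atTop] fun n : ℕ => (1 : ℝ) / (k n : ℝ) ^ 2) ∧
    Tendsto (fun n : ℕ => gFun (k n) n ρ) atTop (nhds 1) :=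
  gFun_expansion_intermediate_general ρ k hk hkn
end

section
/- Let ρ < 0 and for intermediate sequences k define g(k,n,ρ) = (k/n)^ρ Γ(n+1)Γ(k-ρ+1)/(Γ(n-ρ+1)Γ(k+1)). Then g(k,n,2ρ) - (g(k,n,ρ))² = ρ²/k + o(1/k) as n → ∞ (with k → ∞, k/n → 0). -/
open Real Filter Asymptotics

/-!
With `a_ρ(m) = Γ(m+1) / (m^ρ Γ(m-ρ+1))` we have `g(k,n,ρ) = a_ρ(n) / a_ρ(k)`, and `a_ρ(m) → 1` by
Euler's limit formula. The increment `log a_ρ(m+1) - log a_ρ(m) = ρ log(1-x) - log(1-ρx)`,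
`x = 1/(m+1)`, is `(ρ²-ρ)x²/2 + O(x³)`, so summing the tail (Stolz–Cesàro against `1/m`) gives
`m log a_ρ(m) → -(ρ²-ρ)/2`. Since `k/n → 0`, the term `a_ρ(n)` is negligible and
`k (g(k,n,ρ)^p - 1) → p (ρ²-ρ)/2`. Hence `k (g(k,n,2ρ) - g(k,n,ρ)² - ρ²/k)` tends to
`((4ρ²-2ρ) - 2(ρ²-ρ))/2 - ρ² = 0`.
-/

open Topology

theorem abs_sub_le_sub_of_abs_sub_succ_le {f g : ℕ → ℝ} {m M : ℕ} (hmM : m ≤ M)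
    (h : ∀ j, m ≤ j → |f (j + 1) - f j| ≤ g j - g (j + 1)) : |f M - f m| ≤ g m - g M := by
  induction M, hmM using Nat.le_induction with
  | base => simp
  | succ M hmM ih =>
    calc |f (M + 1) - f m| ≤ |f (M + 1) - f M| + |f M - f m| := abs_sub_le _ _ _
      _ ≤ (g M - g (M + 1)) + (g m - g M) := add_le_add (h M hmM) ih
      _ = g m - g (M + 1) := by ring

/-- Stolz–Cesàro for `u m` against `1 / m`. -/
theorem tendsto_natCast_mul_of_tendsto_mul_succ_mul_sub {u : ℕ → ℝ} {L : ℝ}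
    (hu : Tendsto u atTop (𝓝 0))
    (hdu : Tendsto (fun j : ℕ => (j : ℝ) * (j + 1) * (u (j + 1) - u j)) atTop (𝓝 L)) :
    Tendsto (fun m : ℕ => (m : ℝ) * u m) atTop (𝓝 (-L)) := by
  rw [Metric.tendsto_atTop]
  intro ε hε
  obtain ⟨N, hN⟩ := Metric.tendsto_atTop.1 hdu (ε / 2) (half_pos hε)
  refine ⟨N + 1, fun m hm => ?_⟩
  have hm0 : (0 : ℝ) < m := by exact_mod_cast (by omega : 0 < m)
  set f : ℕ → ℝ := fun j => u j + L / j with hf_def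
  have hstep : ∀ j, m ≤ j → |f (j + 1) - f j| ≤ ε / 2 / j - ε / 2 / ((j + 1 : ℕ) : ℝ) := by
    intro j hj
    push_cast
    have hj0 : (0 : ℝ) < j := by exact_mod_cast (by omega : 0 < j)
    have hf : f (j + 1) - f j = ((j : ℝ) * (j + 1) * (u (j + 1) - u j) - L) / (j * (j + 1)) := by
      simp only [hf_def]; push_cast; field_simp; ring
    have hg : ε / 2 / j - ε / 2 / (j + 1) = ε / 2 / (j * (j + 1)) := by field_simp; ring
    rw [hf, hg, abs_div, abs_of_pos (mul_pos hj0 (by linarith))]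
    gcongr
    exact (Real.dist_eq _ L ▸ hN j (by omega)).le
  have hf0 : Tendsto f atTop (𝓝 0) := by
    simpa using hu.add (tendsto_const_div_atTop_nhds_zero_nat L)
  have hfm : |f m| ≤ ε / 2 / m := by
    have hlim : Tendsto (fun M => |f M - f m|) atTop (𝓝 |f m|) := by
      simpa using (hf0.sub_const (f m)).abs
    refine le_of_tendsto hlim (eventually_atTop.2 ⟨m, fun M hM => ?_⟩)
    have hM0 : (0 : ℝ) ≤ ε / 2 / M := by positivity
    linarith [abs_sub_le_sub_of_abs_sub_succ_le (g := fun j : ℕ => ε / 2 / (j : ℝ)) hM hstep]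
  calc dist ((m : ℝ) * u m) (-L) = m * |f m| := by
        rw [Real.dist_eq, ← abs_of_pos hm0, ← abs_mul, abs_of_pos hm0]
        congr 1
        simp only [hf_def]
        field_simp
        ring
    _ ≤ m * (ε / 2 / m) := by gcongr
    _ < ε := by field_simp; linarith

theorem Filter.Tendsto.mul_exp_sub_one {α : Type*} {l : Filter α} {t u : α → ℝ} {c : ℝ}
    (ht : Tendsto t l atTop) (htu : Tendsto (fun x => t x * u x) l (𝓝 c)) :
    Tendsto (fun x => t x * (Real.exp (u x) - 1)) l (𝓝 c) := by
  have hu : Tendsto u l (𝓝 0) := by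
    have := htu.mul (tendsto_inv_atTop_zero.comp ht)
    rw [mul_zero] at this
    refine this.congr' ?_
    filter_upwards [ht.eventually_gt_atTop 0] with x hx
    simp only [Function.comp_apply]
    field_simp
  have herr : Tendsto (fun x => t x * (Real.exp (u x) - 1 - u x)) l (𝓝 0) := by
    refine squeeze_zero_norm' ?_ (by simpa using (htu.mul hu).norm)
    filter_upwards [(by simpa using hu.abs : Tendsto (fun x => |u x|) l (𝓝 0)).eventually
      (ge_mem_nhds one_pos)] with x hx
    simp only [norm_mul, Real.norm_eq_abs, mul_assoc]
    gcongr
    simpa [sq] using abs_exp_sub_one_sub_id_le hx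
  have := herr.add htu
  rw [zero_add] at this
  exact this.congr fun x => by ring

theorem isBigO_log_one_sub_add_add_sq_div_two :
    (fun x : ℝ => log (1 - x) + x + x ^ 2 / 2) =O[𝓝 0] fun x => x ^ 3 := by
  refine IsBigO.of_bound 2 ?_
  filter_upwards [(by simpa using (continuous_abs.tendsto (0 : ℝ)) :
    Tendsto (fun x : ℝ => |x|) (𝓝 0) (𝓝 0)).eventually (ge_mem_nhds one_half_pos)] with x hx
  have h := abs_log_sub_add_sum_range_le (hx.trans_lt one_half_lt_one) 2
  simp only [Finset.sum_range_succ, Finset.sum_range_zero] at h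
  norm_num at h
  rw [Real.norm_eq_abs, Real.norm_eq_abs, abs_pow]
  calc |log (1 - x) + x + x ^ 2 / 2| = |x + x ^ 2 / 2 + log (1 - x)| := by ring_nf
    _ ≤ |x| ^ 3 / (1 - |x|) := h
    _ ≤ 2 * |x| ^ 3 := by
      rw [div_le_iff₀ (by linarith)]
      nlinarith [pow_nonneg (abs_nonneg x) 3]

theorem tendsto_mul_log_one_sub_sub_log_one_sub_mul_div_sq (ρ : ℝ) :
    Tendsto (fun x : ℝ => (ρ * log (1 - x) - log (1 - ρ * x)) / x ^ 2) (𝓝[≠] 0)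
      (𝓝 ((ρ ^ 2 - ρ) / 2)) := by
  set E : ℝ → ℝ := fun x => log (1 - x) + x + x ^ 2 / 2
  have hE : E =O[𝓝 0] fun x => x ^ 3 := isBigO_log_one_sub_add_add_sq_div_two
  have hEρ : (fun x => E (ρ * x)) =O[𝓝 0] fun x => x ^ 3 := by
    have hρx : Tendsto (fun x : ℝ => ρ * x) (𝓝 0) (𝓝 0) := by
      simpa using (continuous_const_mul ρ).tendsto (0 : ℝ)
    refine (hE.comp_tendsto hρx).trans ?_
    simpa [Function.comp_def, mul_pow] using
      (isBigO_refl (fun x : ℝ => x ^ 3) (𝓝 0)).const_mul_left (ρ ^ 3)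
  have hrem : (fun x => ρ * E x - E (ρ * x)) =o[𝓝 0] fun x => x ^ 2 :=
    ((hE.const_mul_left ρ).sub hEρ).trans_isLittleO (isLittleO_pow_pow (by norm_num))
  have h := (hrem.mono (nhdsWithin_le_nhds (s := {0}ᶜ))).tendsto_div_nhds_zero.const_add
    ((ρ ^ 2 - ρ) / 2)
  rw [add_zero] at h
  refine h.congr' ?_
  filter_upwards [self_mem_nhdsWithin] with x hx
  have hx : x ≠ 0 := hx
  simp only [E]
  field_simp
  ring

theorem Gamma_add_natCast_eq_mul_prod {s : ℝ} (hs : 0 < s) (n : ℕ) :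
    Gamma (s + n) = Gamma s * ∏ j ∈ Finset.range n, (s + j) := by
  induction n with
  | zero => simp
  | succ n ih =>
    rw [Finset.prod_range_succ, ← mul_assoc, ← ih, Nat.cast_succ, ← add_assoc,
      Gamma_add_one (by positivity), mul_comm]

noncomputable def gammaRatio (ρ : ℝ) (m : ℕ) : ℝ :=
  Gamma (m + 1) / ((m : ℝ) ^ ρ * Gamma (m - ρ + 1))

theorem gammaRatio_pos {ρ : ℝ} (hρ : ρ < 0) {m : ℕ} (hm : m ≠ 0) : 0 < gammaRatio ρ m := by
  have hm0 : (0 : ℝ) < m := by exact_mod_cast Nat.pos_of_ne_zero hm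
  exact div_pos (Gamma_pos_of_pos (by positivity))
    (mul_pos (rpow_pos_of_pos hm0 ρ) (Gamma_pos_of_pos (by linarith)))

theorem gammaRatio_eq_GammaSeq_div {ρ : ℝ} (hρ : ρ < 0) {m : ℕ} (hm : m ≠ 0) :
    gammaRatio ρ m = GammaSeq (-ρ) m / Gamma (-ρ) := by
  have hm0 : (0 : ℝ) < m := by exact_mod_cast Nat.pos_of_ne_zero hm
  have hprod := Gamma_add_natCast_eq_mul_prod (neg_pos.2 hρ) (m + 1)
  have hΓm : Gamma (m - ρ + 1) ≠ 0 := (Gamma_pos_of_pos (by linarith)).ne'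
  rw [show -ρ + ((m + 1 : ℕ) : ℝ) = m - ρ + 1 by push_cast; ring] at hprod
  have hP : ∏ j ∈ Finset.range (m + 1), (-ρ + j) ≠ 0 := right_ne_zero_of_mul (hprod ▸ hΓm)
  rw [gammaRatio, GammaSeq, Gamma_nat_eq_factorial, rpow_neg hm0.le, hprod]
  have : (m : ℝ) ^ ρ ≠ 0 := (rpow_pos_of_pos hm0 ρ).ne'
  field_simp

theorem tendsto_gammaRatio {ρ : ℝ} (hρ : ρ < 0) : Tendsto (gammaRatio ρ) atTop (𝓝 1) := by
  have hΓ : Gamma (-ρ) ≠ 0 := (Gamma_pos_of_pos (neg_pos.2 hρ)).ne'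
  have h := (GammaSeq_tendsto_Gamma (-ρ)).div_const (Gamma (-ρ))
  rw [div_self hΓ] at h
  refine h.congr' ?_
  filter_upwards [eventually_ne_atTop 0] with m hm
  exact (gammaRatio_eq_GammaSeq_div hρ hm).symm

theorem log_gammaRatio_succ_sub {ρ : ℝ} (hρ : ρ < 0) {m : ℕ} (hm : m ≠ 0) :
    log (gammaRatio ρ (m + 1)) - log (gammaRatio ρ m) =
      ρ * log (1 - 1 / (m + 1)) - log (1 - ρ * (1 / (m + 1))) := by
  have hm0 : (0 : ℝ) < m := by exact_mod_cast Nat.pos_of_ne_zero hm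
  have h1 : 1 - 1 / ((m : ℝ) + 1) = m / (m + 1) := by field_simp; ring
  have h2 : 1 - ρ * (1 / ((m : ℝ) + 1)) = (m + 1 - ρ) / (m + 1) := by field_simp
  have hsucc : gammaRatio ρ (m + 1) =
      gammaRatio ρ m * ((m / (m + 1)) ^ ρ / ((m + 1 - ρ) / (m + 1))) := by
    have hΓ1 : Gamma ((m : ℝ) + 1 + 1) = (m + 1) * Gamma (m + 1) := Gamma_add_one (by positivity)
    have hΓ2 : Gamma ((m : ℝ) + 1 - ρ + 1) = (m - ρ + 1) * Gamma (m - ρ + 1) := by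
      rw [show (m : ℝ) + 1 - ρ + 1 = m - ρ + 1 + 1 by ring, Gamma_add_one (by linarith)]
    rw [gammaRatio, gammaRatio, div_rpow hm0.le (by positivity), Nat.cast_succ, hΓ1, hΓ2]
    have : (m : ℝ) - ρ + 1 ≠ 0 := by linarith
    have : (m : ℝ) + 1 - ρ ≠ 0 := by linarith
    have : ((m : ℝ) + 1) ^ ρ ≠ 0 := (rpow_pos_of_pos (by positivity) ρ).ne'
    have : (m : ℝ) ^ ρ ≠ 0 := (rpow_pos_of_pos hm0 ρ).ne'
    field_simp
    ring
  have hmρ : (0 : ℝ) < (m + 1 - ρ) / (m + 1) := by apply div_pos <;> linarith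
  have hpow : (0 : ℝ) < ((m : ℝ) / (m + 1)) ^ ρ := by positivity
  rw [h1, h2, hsucc, log_mul (gammaRatio_pos hρ hm).ne' (div_pos hpow hmρ).ne',
    log_div hpow.ne' hmρ.ne', log_rpow (by positivity)]
  ring

theorem tendsto_natCast_mul_log_gammaRatio {ρ : ℝ} (hρ : ρ < 0) :
    Tendsto (fun m : ℕ => (m : ℝ) * log (gammaRatio ρ m)) atTop (𝓝 (-((ρ ^ 2 - ρ) / 2))) := by
  have hlog : Tendsto (fun m => log (gammaRatio ρ m)) atTop (𝓝 0) := by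
    simpa [Function.comp_def] using
      (continuousAt_log one_ne_zero).tendsto.comp (tendsto_gammaRatio hρ)
  have hx : Tendsto (fun j : ℕ => 1 / ((j : ℝ) + 1)) atTop (𝓝[≠] 0) :=
    tendsto_nhdsWithin_iff.2 ⟨tendsto_one_div_add_atTop_nhds_zero_nat,
      Eventually.of_forall fun j => (by positivity : (0 : ℝ) < 1 / ((j : ℝ) + 1)).ne'⟩
  have hincr := (tendsto_natCast_div_add_atTop (1 : ℝ)).mul
    ((tendsto_mul_log_one_sub_sub_log_one_sub_mul_div_sq ρ).comp hx)
  rw [one_mul] at hincr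
  refine tendsto_natCast_mul_of_tendsto_mul_succ_mul_sub hlog (hincr.congr' ?_)
  filter_upwards [eventually_ne_atTop 0] with j hj
  rw [Function.comp_apply, log_gammaRatio_succ_sub hρ hj]
  field_simp

theorem gFun_eq_gammaRatio_div {ρ : ℝ} (hρ : ρ < 0) {k n : ℕ} (hk : k ≠ 0) (hn : n ≠ 0) :
    gFun k n ρ = gammaRatio ρ n / gammaRatio ρ k := by
  have hk0 : (0 : ℝ) < k := by exact_mod_cast Nat.pos_of_ne_zero hk
  have hn0 : (0 : ℝ) < n := by exact_mod_cast Nat.pos_of_ne_zero hn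
  have : Gamma ((k : ℝ) + 1) ≠ 0 := (Gamma_pos_of_pos (by positivity)).ne'
  have : Gamma ((k : ℝ) - ρ + 1) ≠ 0 := (Gamma_pos_of_pos (by linarith)).ne'
  have : Gamma ((n : ℝ) - ρ + 1) ≠ 0 := (Gamma_pos_of_pos (by linarith)).ne'
  have : (k : ℝ) ^ ρ ≠ 0 := (rpow_pos_of_pos hk0 ρ).ne'
  have : (n : ℝ) ^ ρ ≠ 0 := (rpow_pos_of_pos hn0 ρ).ne'
  rw [gFun, gammaRatio, gammaRatio, div_rpow hk0.le hn0.le]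
  field_simp

section IntermediateSequence

variable {k : ℕ → ℕ}

theorem tendsto_mul_log_gFun {ρ : ℝ} (hρ : ρ < 0) (hk : Tendsto k atTop atTop)
    (hkn : Tendsto (fun n : ℕ => (k n : ℝ) / n) atTop (𝓝 0)) :
    Tendsto (fun n => (k n : ℝ) * log (gFun (k n) n ρ)) atTop (𝓝 ((ρ ^ 2 - ρ) / 2)) := by
  have hlog := tendsto_natCast_mul_log_gammaRatio hρ
  have hn : Tendsto (fun n => (k n : ℝ) * log (gammaRatio ρ n)) atTop (𝓝 0) := by
    have h := hkn.mul hlog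
    rw [zero_mul] at h
    refine h.congr' ?_
    filter_upwards [eventually_ne_atTop 0] with n hn
    field_simp
  have h := hn.sub (hlog.comp hk)
  rw [zero_sub, neg_neg] at h
  refine h.congr' ?_
  filter_upwards [eventually_ne_atTop 0, hk.eventually_ne_atTop 0] with n hn hkn
  rw [Function.comp_apply, gFun_eq_gammaRatio_div hρ hkn hn,
    log_div (gammaRatio_pos hρ hn).ne' (gammaRatio_pos hρ hkn).ne']
  ring

theorem tendsto_mul_gFun_pow_sub_one {ρ : ℝ} (hρ : ρ < 0) (hk : Tendsto k atTop atTop)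
    (hkn : Tendsto (fun n : ℕ => (k n : ℝ) / n) atTop (𝓝 0)) (p : ℕ) :
    Tendsto (fun n => (k n : ℝ) * (gFun (k n) n ρ ^ p - 1)) atTop
      (𝓝 (p * ((ρ ^ 2 - ρ) / 2))) := by
  have htu : Tendsto (fun n => (k n : ℝ) * (p * log (gFun (k n) n ρ))) atTop
      (𝓝 (p * ((ρ ^ 2 - ρ) / 2))) :=
    ((tendsto_mul_log_gFun hρ hk hkn).const_mul (p : ℝ)).congr fun n => by ring
  have h := (tendsto_natCast_atTop_atTop.comp hk).mul_exp_sub_one htu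
  refine h.congr' ?_
  filter_upwards [eventually_ne_atTop 0, hk.eventually_ne_atTop 0] with n hn hkn
  rw [Function.comp_apply, exp_nat_mul,
    exp_log ((gFun_eq_gammaRatio_div hρ hkn hn).symm ▸ div_pos (gammaRatio_pos hρ hn)
      (gammaRatio_pos hρ hkn))]

end IntermediateSequence

/-- For `ρ < 0` and an intermediate sequence `k = k(n)` (`k → ∞`,
`k/n → 0`), `g(k,n,2ρ) - g(k,n,ρ)² = ρ²/k + o(1/k)` as `n → ∞`. -/
theorem gFun_variance_expansion (ρ : ℝ) (hρ : ρ < 0) (k : ℕ → ℕ)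
    (hk : Tendsto k atTop atTop)
    (hkn : Tendsto (fun n : ℕ => (k n : ℝ) / n) atTop (nhds 0)) :
    (fun n : ℕ => gFun (k n) n (2 * ρ) - (gFun (k n) n ρ) ^ 2 - ρ ^ 2 / (k n : ℝ))
      =o[atTop] fun n : ℕ => (1 : ℝ) / (k n : ℝ) := by
  have h2ρ := tendsto_mul_gFun_pow_sub_one (by linarith : 2 * ρ < 0) hk hkn 1
  have hρ2 := tendsto_mul_gFun_pow_sub_one hρ hk hkn 2
  have hlim := (h2ρ.sub hρ2).sub_const (ρ ^ 2)
  rw [show (1 : ℕ) * (((2 * ρ) ^ 2 - 2 * ρ) / 2) - (2 : ℕ) * ((ρ ^ 2 - ρ) / 2) - ρ ^ 2 = 0 by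
    push_cast; ring] at hlim
  rw [isLittleO_iff_tendsto' ?_]
  · refine hlim.congr' ?_
    filter_upwards [hk.eventually_ne_atTop 0] with n hkn
    have : (k n : ℝ) ≠ 0 := Nat.cast_ne_zero.2 hkn
    field_simp
    ring
  · filter_upwards [hk.eventually_ne_atTop 0] with n hkn h
    simp [hkn] at h
end
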